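/- arXiv:2004.13378 — 3 statements merged into one kernel-verified Lean document; each statement's English description precedes it below -/
import Mathlib

section
/- Let r⊕ > 0 and rmin > 0 be real numbers, let rmax = √(2·r⊕·rmin + rmin²), fix r₀ with rmin ≤ r₀ ≤ rmax, and let m be a natural number. On a probability space let D₁, …, D_m be independent identically distributed real random variables with density r ↦ 2r/((2·r⊕ + rmin)² − r₀²) on (r₀, 2·r⊕ + rmin] (and 0 elsewhere). Then the probability that no D_n is at most rmax equals P(∀ n, D_n > rmax) = (1 − (rmin − (r₀² − rmin²)/(2·r⊕)) / (2·(r⊕ + rmin) − (r₀² − rmin²)/(2·r⊕)))^m. -/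
open MeasureTheory ProbabilityTheory

/-! The events `{rmax < D n}` are independent, so the probability that all of them occur is the
`m`-th power of `P(rmax < D₀) = ∫_{rmax}^{2r⊕+rmin} 2r/((2r⊕+rmin)² − r₀²) dr
= ((2r⊕+rmin)² − rmax²)/((2r⊕+rmin)² − r₀²)`, and with `rmax² = 2 r⊕ rmin + rmin²` this is
`1 − P_I`. -/

theorem ProbabilityTheory.iIndepFun.measure_forall_mem_eq_pow {Ω ι β : Type*}
    [MeasurableSpace Ω] [Fintype ι] [MeasurableSpace β] {P : Measure Ω} {X : ι → Ω → β}
    {μ : Measure β} (hX : iIndepFun X P) (hXm : ∀ i, AEMeasurable (X i) P)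
    (hlaw : ∀ i, P.map (X i) = μ)
    {s : Set β} (hs : MeasurableSet s) :
    P {ω | ∀ i, X i ω ∈ s} = μ s ^ Fintype.card ι := by
  have hevent : {ω | ∀ i, X i ω ∈ s} = ⋂ i, X i ⁻¹' s := by
    ext ω
    simp
  rw [hevent, hX.meas_iInter fun i => ⟨s, hs, rfl⟩]
  simp only [← Measure.map_apply_of_aemeasurable (hXm _) hs, hlaw, Finset.prod_const,
    Finset.card_univ]

theorem withDensity_linearDensity_apply_Ioi {a b t : ℝ} (ha : 0 ≤ a) (hat : a ≤ t) (htb : t ≤ b) :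
    (volume : Measure ℝ).withDensity (fun r => ENNReal.ofReal
        (if a < r ∧ r ≤ b then 2 * r / (b ^ 2 - a ^ 2) else 0)) (Set.Ioi t) =
      ENNReal.ofReal ((b ^ 2 - t ^ 2) / (b ^ 2 - a ^ 2)) := by
  set C := b ^ 2 - a ^ 2
  have hC : 0 ≤ C := by nlinarith
  have hdensity : (fun r => ENNReal.ofReal (if a < r ∧ r ≤ b then 2 * r / C else 0)) =
      (Set.Ioc a b).indicator fun r => ENNReal.ofReal (2 * r / C) := by
    ext r
    simp only [Set.indicator_apply, Set.mem_Ioc, apply_ite ENNReal.ofReal, ENNReal.ofReal_zero]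
  have hintegrable : IntegrableOn (fun r => 2 * r / C) (Set.Ioc t b) :=
    (by fun_prop : Continuous fun r : ℝ => 2 * r / C).integrableOn_Ioc
  have hnonneg : 0 ≤ᵐ[volume.restrict (Set.Ioc t b)] fun r => 2 * r / C := by
    filter_upwards [ae_restrict_mem measurableSet_Ioc] with r hr
    have : 0 < r := (ha.trans hat).trans_lt hr.1
    positivity
  rw [withDensity_apply _ measurableSet_Ioi, hdensity, lintegral_indicator measurableSet_Ioc,
    Measure.restrict_restrict measurableSet_Ioc, Set.Ioc_inter_Ioi, sup_eq_right.mpr hat,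
    ← ofReal_integral_eq_lintegral_ofReal hintegrable hnonneg,
    ← intervalIntegral.integral_of_le htb, intervalIntegral.integral_div,
    intervalIntegral.integral_const_mul, integral_id]
  congr 1
  ring

theorem one_sub_successProbability_eq {rE rmin r₀ : ℝ} (hrE : rE ≠ 0)
    (hr₀ : (2 * rE + rmin) ^ 2 - r₀ ^ 2 ≠ 0) :
    1 - (rmin - (r₀ ^ 2 - rmin ^ 2) / (2 * rE)) /
        (2 * (rE + rmin) - (r₀ ^ 2 - rmin ^ 2) / (2 * rE)) =
      ((2 * rE + rmin) ^ 2 - (2 * rE * rmin + rmin ^ 2)) / ((2 * rE + rmin) ^ 2 - r₀ ^ 2) := by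
  have hden : 2 * (rE + rmin) - (r₀ ^ 2 - rmin ^ 2) / (2 * rE) =
      ((2 * rE + rmin) ^ 2 - r₀ ^ 2) / (2 * rE) := by
    field_simp
    ring
  rw [hden]
  field_simp
  ring

/-- **Corollary 1.** Probability of having zero co-channel interferers: with `m` other
co-channel satellites, each with distance distributed with the conditional density of
Lemma 3, the probability that none is within the horizon distance `rmax` is
`(1 - P_I) ^ m`. -/
theorem probability_zero_interference
    {Ω : Type*} [MeasurableSpace Ω] (P : Measure Ω) [IsProbabilityMeasure P]
    (rE rmin rmax r₀ : ℝ) (hrE : 0 < rE) (hrmin : 0 < rmin)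
    (hrmax : rmax = Real.sqrt (2 * rE * rmin + rmin ^ 2))
    (hr₀l : rmin ≤ r₀) (hr₀u : r₀ ≤ rmax)
    (m : ℕ)
    (D : Fin m → Ω → ℝ)
    (hDmeas : ∀ n, Measurable (D n))
    (hDindep : iIndepFun D P)
    (hDlaw : ∀ n, P.map (D n) =
      (volume : Measure ℝ).withDensity (fun r =>
        ENNReal.ofReal
          (if r₀ < r ∧ r ≤ 2 * rE + rmin then
            2 * r / ((2 * rE + rmin) ^ 2 - r₀ ^ 2) else 0))) :
    P {ω | ∀ n : Fin m, rmax < D n ω} =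
      ENNReal.ofReal
        ((1 - (rmin - (r₀ ^ 2 - rmin ^ 2) / (2 * rE)) /
          (2 * (rE + rmin) - (r₀ ^ 2 - rmin ^ 2) / (2 * rE))) ^ m) := by
  have hrmax_sq : rmax ^ 2 = 2 * rE * rmin + rmin ^ 2 := by
    rw [hrmax, Real.sq_sqrt (by positivity)]
  have hrmax_le : rmax ≤ 2 * rE + rmin := by
    rw [hrmax]
    exact Real.sqrt_le_iff.mpr ⟨by positivity, by nlinarith⟩
  have hr₀_lt : r₀ ^ 2 < (2 * rE + rmin) ^ 2 := by nlinarith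
  have hall := hDindep.measure_forall_mem_eq_pow (fun n => (hDmeas n).aemeasurable) hDlaw
    (measurableSet_Ioi (a := rmax))
  rw [withDensity_linearDensity_apply_Ioi (hrmin.le.trans hr₀l) hr₀u hrmax_le,
    Fintype.card_fin] at hall
  rw [one_sub_successProbability_eq hrE.ne' (by linarith), ← hrmax_sq,
    ENNReal.ofReal_pow (div_nonneg (by nlinarith) (by linarith))]
  exact hall
end

section
/- Let r⊕ > 0, rmin > 0, α > 0, p_i > 0 be real numbers, let rmax = √(2·r⊕·rmin + rmin²), fix r₀ with rmin ≤ r₀ < rmax, and let m be a natural number. On a probability space let D₁, …, D_m be i.i.d. real random variables with density r ↦ 2r/((2·r⊕ + rmin)² − r₀²) on (r₀, 2·r⊕ + rmin], and let G₁, …, G_m be i.i.d. nonnegative real random variables, independent of (D₁, …, D_m), with Laplace transform L_G(x) = E[exp(−x·G₁)]. Define the interference I = Σ_{n=1}^m 1{D_n ≤ rmax}·p_i·G_n·D_n^{−α}. Then for every s ≥ 0, E[exp(−s·I)] = Σ_{k=0}^{m} C(m, k)·(1 − P_I)^{m−k}·(∫_{r₀}^{rmax} L_G(s·p_i·r^{−α})·(2r/((2·r⊕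 + rmin)² − r₀²)) dr)^k, where P_I = (rmax² − r₀²)/((2·r⊕ + rmin)² − r₀²). -/
/-!
`exp (-s I)` is the product over the links of `h (D n) (G n)`, where `h d g` is the Laplace
integrand of a single link. Since the distance vector and the gain vector are independent with
i.i.d. coordinates, the expectation of the product is the `m`-th power of `∫∫ h d g dν(g) dμ(d)`,
`μ` the law of the distances. Averaging over the gain, a satellite below the horizon
(`d > rmax`) contributes `1` and a visible one `L_G (s pi d^(-α))`; integrating against the density
`f` of `μ` then gives `∫_{r₀}^{rmax} L_G (s pi r^(-α)) f(r) dr + (1 - P_I)`, and the binomial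
theorem expands its `m`-th power.
-/

open MeasureTheory ProbabilityTheory

theorem integral_prod_apply_eq_pow_of_iid {ι Ω X Y 𝕜 : Type*} [Fintype ι] [RCLike 𝕜]
    [MeasurableSpace Ω] [MeasurableSpace X] [MeasurableSpace Y]
    {P : Measure Ω} [IsProbabilityMeasure P] {μ : Measure X} {ν : Measure Y}
    {D : ι → Ω → X} {G : ι → Ω → Y} (hD : ∀ i, Measurable (D i)) (hG : ∀ i, Measurable (G i))
    (hDi : iIndepFun D P) (hGi : iIndepFun G P)
    (hDG : IndepFun (fun ω i => D i ω) (fun ω i => G i ω) P)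
    (hμ : ∀ i, P.map (D i) = μ) (hν : ∀ i, P.map (G i) = ν)
    {h : X → Y → 𝕜} (hh : Measurable (Function.uncurry h)) {C : ℝ} (hC : ∀ x y, ‖h x y‖ ≤ C) :
    ∫ ω, ∏ i, h (D i ω) (G i ω) ∂P = (∫ x, ∫ y, h x y ∂ν ∂μ) ^ Fintype.card ι := by
  rcases isEmpty_or_nonempty ι with hι | ⟨⟨i₀⟩⟩
  · simp
  have : IsProbabilityMeasure μ := hμ i₀ ▸ Measure.isProbabilityMeasure_map (hD i₀).aemeasurable
  have : IsProbabilityMeasure ν := hν i₀ ▸ Measure.isProbabilityMeasure_map (hG i₀).aemeasurable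
  have hDvec : Measurable fun ω i => D i ω := measurable_pi_lambda _ hD
  have hGvec : Measurable fun ω i => G i ω := measurable_pi_lambda _ hG
  have hmap : P.map (fun ω => ((D · ω), (G · ω))) =
      (Measure.pi fun _ => μ).prod (Measure.pi fun _ => ν) := by
    rw [hDG.map_prod_eq_prod_map_map hDvec.aemeasurable hGvec.aemeasurable,
      hDi.map_fun_eq_pi_map fun i => (hD i).aemeasurable,
      hGi.map_fun_eq_pi_map fun i => (hG i).aemeasurable]
    simp only [hμ, hν]
  set F : (ι → X) × (ι → Y) → 𝕜 := fun p => ∏ i, h (p.1 i) (p.2 i)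
  have hF : Measurable F := Finset.measurable_prod _ fun i _ =>
    hh.comp (f := fun p : (ι → X) × (ι → Y) => (p.1 i, p.2 i)) (by fun_prop)
  have hFint : Integrable F ((Measure.pi fun _ => μ).prod (Measure.pi fun _ => ν)) :=
    .of_bound hF.aestronglyMeasurable (C ^ Fintype.card ι) <| .of_forall fun p =>
      (Finset.norm_prod_le _ _).trans <| (Finset.prod_le_prod (fun _ _ => norm_nonneg _)
        fun _ _ => hC _ _).trans_eq (by simp)
  calc ∫ ω, F ((D · ω), (G · ω)) ∂P
      = ∫ p, F p ∂(Measure.pi fun _ => μ).prod (Measure.pi fun _ => ν) := by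
        rw [← hmap, integral_map (hDvec.prodMk hGvec).aemeasurable hF.aestronglyMeasurable]
    _ = ∫ x, ∏ i, ∫ y, h (x i) y ∂ν ∂Measure.pi fun _ => μ := by
        rw [integral_prod F hFint]
        congr with x
        exact integral_fintype_prod_eq_prod (fun i y => h (x i) y)
    _ = _ := integral_fintype_prod_eq_pow (fun x => ∫ y, h x y ∂ν)

section Density

variable {X : Type*} [MeasurableSpace X] {μ : Measure X} {S : Set X} {f : X → ℝ}

theorem integral_withDensity_ofReal_indicator {E : Type*} [NormedAddCommGroup E]
    [NormedSpace ℝ E] (hS : MeasurableSet S) (hf : Measurable f) (hf₀ : ∀ x ∈ S, 0 ≤ f x)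
    (g : X → E) :
    ∫ x, g x ∂μ.withDensity (fun x => ENNReal.ofReal (S.indicator f x)) =
      ∫ x in S, f x • g x ∂μ := by
  rw [integral_withDensity_eq_integral_toReal_smul (hf.indicator hS).ennreal_ofReal
      (.of_forall fun _ => ENNReal.ofReal_lt_top), ← integral_indicator hS]
  congr with x
  by_cases hx : x ∈ S
  · simp [hx, ENNReal.toReal_ofReal (hf₀ x hx)]
  · simp [hx]

theorem ae_mem_withDensity_ofReal_indicator (hS : MeasurableSet S) (hf : Measurable f) :
    ∀ᵐ x ∂μ.withDensity (fun x => ENNReal.ofReal (S.indicator f x)), x ∈ S := by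
  rw [ae_withDensity_iff (hf.indicator hS).ennreal_ofReal]
  refine .of_forall fun x hx => ?_
  by_contra hxS
  simp [hxS] at hx

end Density

theorem setIntegral_Ioc_two_mul_div (u v c : ℝ) (huv : u ≤ v) :
    ∫ r in Set.Ioc u v, 2 * r / c = (v ^ 2 - u ^ 2) / c := by
  rw [← intervalIntegral.integral_of_le huv, intervalIntegral.integral_div,
    intervalIntegral.integral_const_mul, integral_id]
  ring

theorem sqrt_two_mul_add_sq_lt {rE rmin : ℝ} (hrE : 0 < rE) (hrmin : 0 < rmin) :
    Real.sqrt (2 * rE * rmin + rmin ^ 2) < 2 * rE + rmin := by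
  rw [Real.sqrt_lt' (by positivity)]
  nlinarith

noncomputable def distanceLaw (a b : ℝ) : Measure ℝ :=
  volume.withDensity fun r =>
    ENNReal.ofReal ((Set.Ioc a b).indicator (fun r => 2 * r / (b ^ 2 - a ^ 2)) r)

/-- The factor of `exp (-s I)` contributed by a link at distance `d` with gain `g`, for transmit
power `p` and horizon distance `ρ`. The cut-offs `0 < d` and `max g 0` make it bounded by `1`
everywhere; almost surely they change nothing. -/
noncomputable def interferenceKernel (s p α ρ : ℝ) (d g : ℝ) : ℝ :=
  if d ∈ Set.Ioc 0 ρ then Real.exp (-(s * (p * max g 0 * d ^ (-α)))) else 1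

namespace interferenceKernel

variable {s p α ρ : ℝ}

theorem measurable_uncurry : Measurable (Function.uncurry (interferenceKernel s p α ρ)) :=
  Measurable.ite (measurableSet_Ioc.preimage measurable_fst) (by fun_prop) measurable_const

theorem norm_le_one (hs : 0 ≤ s) (hp : 0 ≤ p) (d g : ℝ) :
    ‖interferenceKernel s p α ρ d g‖ ≤ 1 := by
  unfold interferenceKernel
  split_ifs with hd
  · have : 0 ≤ s * (p * max g 0 * d ^ (-α)) := by
      have := Real.rpow_pos_of_pos hd.1 (-α)
      positivity
    rw [Real.norm_of_nonneg (Real.exp_nonneg _)]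
    exact Real.exp_le_one_iff.mpr (neg_nonpos.mpr this)
  · simp

theorem eq_exp {d g : ℝ} (hd : 0 < d) (hg : 0 ≤ g) :
    interferenceKernel s p α ρ d g =
      Real.exp (-(s * if d ≤ ρ then p * g * d ^ (-α) else 0)) := by
  by_cases hdρ : d ≤ ρ
  · simp [interferenceKernel, hd, hdρ, hg]
  · simp [interferenceKernel, hdρ]

theorem exp_neg_mul_sum_eq_prod {ι : Type*} [Fintype ι] {d g : ι → ℝ} (hd : ∀ i, 0 < d i)
    (hg : ∀ i, 0 ≤ g i) :
    Real.exp (-(s * ∑ i, if d i ≤ ρ then p * g i * d i ^ (-α) else 0)) =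
      ∏ i, interferenceKernel s p α ρ (d i) (g i) := by
  rw [Finset.mul_sum, ← Finset.sum_neg_distrib, Real.exp_sum]
  exact Finset.prod_congr rfl fun i _ => (eq_exp (hd i) (hg i)).symm

variable (ν : Measure ℝ)

theorem integral_of_le {d : ℝ} (hd : 0 < d) (hdρ : d ≤ ρ) (hν : ∀ᵐ g ∂ν, 0 ≤ g) :
    ∫ g, interferenceKernel s p α ρ d g ∂ν = ∫ g, Real.exp (-(s * p * d ^ (-α) * g)) ∂ν := by
  refine integral_congr_ae (hν.mono fun g hg => ?_)
  simp only [interferenceKernel, Set.mem_Ioc, hd, hdρ, and_self, if_true, max_eq_left hg]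
  ring_nf

variable [IsProbabilityMeasure ν]

theorem integral_of_lt {d : ℝ} (hρd : ρ < d) : ∫ g, interferenceKernel s p α ρ d g ∂ν = 1 := by
  simp [interferenceKernel, hρd.not_ge]

theorem measurable_integral : Measurable fun d => ∫ g, interferenceKernel s p α ρ d g ∂ν :=
  (measurable_uncurry.stronglyMeasurable.integral_prod_right' (f := Function.uncurry _)).measurable

theorem norm_integral_le_one (hs : 0 ≤ s) (hp : 0 ≤ p) (d : ℝ) :
    ‖∫ g, interferenceKernel s p α ρ d g ∂ν‖ ≤ 1 := by
  simpa using norm_integral_le_of_norm_le_const (μ := ν) (.of_forall (norm_le_one hs hp d))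

theorem integral_integral_distanceLaw {a b : ℝ} (hs : 0 ≤ s) (hp : 0 ≤ p) (ha : 0 ≤ a)
    (haρ : a ≤ ρ) (hρb : ρ ≤ b) (hν : ∀ᵐ g ∂ν, 0 ≤ g) :
    ∫ d, ∫ g, interferenceKernel s p α ρ d g ∂ν ∂distanceLaw a b =
      (∫ r in a..ρ, (∫ g, Real.exp (-(s * p * r ^ (-α) * g)) ∂ν) * (2 * r / (b ^ 2 - a ^ 2))) +
        (b ^ 2 - ρ ^ 2) / (b ^ 2 - a ^ 2) := by
  set f := fun r : ℝ => 2 * r / (b ^ 2 - a ^ 2)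
  have hf : Continuous f := by fun_prop
  have hf₀ : ∀ r ∈ Set.Ioc a b, 0 ≤ f r := fun r hr =>
    div_nonneg (by linarith [hr.1]) (by nlinarith)
  have hint : IntegrableOn (fun r => f r • ∫ g, interferenceKernel s p α ρ r g ∂ν)
      (Set.Ioc a b) :=
    (hf.integrableOn_Icc.mono_set Set.Ioc_subset_Icc_self).mul_bdd
      (measurable_integral ν).aestronglyMeasurable (.of_forall (norm_integral_le_one ν hs hp))
  rw [distanceLaw, integral_withDensity_ofReal_indicator measurableSet_Ioc hf.measurable hf₀,
    ← Set.Ioc_union_Ioc_eq_Ioc haρ hρb, setIntegral_union (Set.Ioc_disjoint_Ioc_of_le le_rfl)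
      measurableSet_Ioc (hint.mono_set (Set.Ioc_subset_Ioc_right hρb))
      (hint.mono_set (Set.Ioc_subset_Ioc_left haρ)), intervalIntegral.integral_of_le haρ]
  congr 1
  · refine setIntegral_congr_fun measurableSet_Ioc fun r hr => ?_
    rw [smul_eq_mul, integral_of_le ν (ha.trans_lt hr.1) hr.2 hν, mul_comm]
  · rw [← setIntegral_Ioc_two_mul_div _ _ _ hρb]
    refine setIntegral_congr_fun measurableSet_Ioc fun r hr => ?_
    rw [smul_eq_mul, integral_of_lt ν hr.1, mul_one]

end interferenceKernel

theorem laplace_transform_interference_general_fading_general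
    {Ω : Type*} [MeasurableSpace Ω] (P : Measure Ω) [IsProbabilityMeasure P]
    (rE rmin rmax r₀ α pi : ℝ) (hrE : 0 < rE) (hrmin : 0 < rmin)
    (hpi : 0 < pi)
    (hrmax : rmax = Real.sqrt (2 * rE * rmin + rmin ^ 2))
    (hr₀l : rmin ≤ r₀) (hr₀u : r₀ < rmax)
    (m : ℕ)
    (D : Fin m → Ω → ℝ) (G : Fin m → Ω → ℝ)
    (hDmeas : ∀ n, Measurable (D n)) (hGmeas : ∀ n, Measurable (G n))
    (hDindep : iIndepFun D P)
    (hGindep : iIndepFun G P)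
    (hDGindep : IndepFun (fun ω => fun n => D n ω) (fun ω => fun n => G n ω) P)
    (hDlaw : ∀ n, P.map (D n) =
      (volume : Measure ℝ).withDensity (fun r =>
        ENNReal.ofReal
          (if r₀ < r ∧ r ≤ 2 * rE + rmin then
            2 * r / ((2 * rE + rmin) ^ 2 - r₀ ^ 2) else 0)))
    (ν : Measure ℝ) [IsProbabilityMeasure ν]
    (hν : ν {g | g < 0} = 0)
    (hGlaw : ∀ n, P.map (G n) = ν)
    (LG : ℝ → ℝ) (hLG : ∀ x, LG x = ∫ g, Real.exp (-(x * g)) ∂ν)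
    (I : Ω → ℝ)
    (hI : ∀ ω, I ω = ∑ n : Fin m,
      if D n ω ≤ rmax then pi * G n ω * (D n ω) ^ (-α) else 0)
    (PI : ℝ) (hPI : PI = (rmax ^ 2 - r₀ ^ 2) / ((2 * rE + rmin) ^ 2 - r₀ ^ 2)) :
    ∀ s : ℝ, 0 ≤ s →
      ∫ ω, Real.exp (-(s * I ω)) ∂P =
        ∑ k ∈ Finset.range (m + 1),
          (m.choose k : ℝ) * (1 - PI) ^ (m - k) *
            (∫ r in r₀..rmax,
              LG (s * pi * r ^ (-α)) * (2 * r / ((2 * rE + rmin) ^ 2 - r₀ ^ 2))) ^ k := by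
  intro s hs
  obtain rfl := funext hLG
  set b := 2 * rE + rmin
  have hr₀ : 0 < r₀ := hrmin.trans_le hr₀l
  have hrmax_lt : rmax < b := hrmax ▸ sqrt_two_mul_add_sq_lt hrE hrmin
  have hDlaw' : ∀ n, P.map (D n) = distanceLaw r₀ b := fun n => by
    simp only [hDlaw n, distanceLaw, Set.indicator_apply, Set.mem_Ioc]
  have hν₀ : ∀ᵐ g ∂ν, 0 ≤ g := by simpa [ae_iff] using hν
  have hexp : ∀ᵐ ω ∂P, Real.exp (-(s * I ω)) =
      ∏ n, interferenceKernel s pi α rmax (D n ω) (G n ω) := by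
    have hD : ∀ n, ∀ᵐ ω ∂P, D n ω ∈ Set.Ioc r₀ b := fun n =>
      ae_of_ae_map (hDmeas n).aemeasurable <| hDlaw' n ▸
        ae_mem_withDensity_ofReal_indicator measurableSet_Ioc (by fun_prop)
    have hG : ∀ n, ∀ᵐ ω ∂P, 0 ≤ G n ω := fun n =>
      ae_of_ae_map (hGmeas n).aemeasurable (hGlaw n ▸ hν₀)
    filter_upwards [ae_all_iff.mpr hD, ae_all_iff.mpr hG] with ω hDω hGω
    rw [hI]
    exact interferenceKernel.exp_neg_mul_sum_eq_prod (fun n => hr₀.trans (hDω n).1) hGω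
  rw [integral_congr_ae hexp, integral_prod_apply_eq_pow_of_iid hDmeas hGmeas hDindep hGindep
    hDGindep hDlaw' hGlaw interferenceKernel.measurable_uncurry
    (interferenceKernel.norm_le_one hs hpi.le), interferenceKernel.integral_integral_distanceLaw ν
    hs hpi.le hr₀.le hr₀u.le hrmax_lt.le hν₀, Fintype.card_fin, add_pow]
  have h1PI : (b ^ 2 - rmax ^ 2) / (b ^ 2 - r₀ ^ 2) = 1 - PI := by
    rw [hPI, one_sub_div (by nlinarith)]
    ring
  refine Finset.sum_congr rfl fun k _ => ?_
  rw [h1PI]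
  ring

/-- **Lemma 5.** Laplace transform of the cumulative co-channel interference power at the
user, conditioned on the serving distance `r₀`, for general i.i.d. fading gains on the
interfering links. -/
theorem laplace_transform_interference_general_fading
    {Ω : Type*} [MeasurableSpace Ω] (P : Measure Ω) [IsProbabilityMeasure P]
    (rE rmin rmax r₀ α pi : ℝ) (hrE : 0 < rE) (hrmin : 0 < rmin)
    (hα : 0 < α) (hpi : 0 < pi)
    (hrmax : rmax = Real.sqrt (2 * rE * rmin + rmin ^ 2))
    (hr₀l : rmin ≤ r₀) (hr₀u : r₀ < rmax)
    (m : ℕ)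
    (D : Fin m → Ω → ℝ) (G : Fin m → Ω → ℝ)
    (hDmeas : ∀ n, Measurable (D n)) (hGmeas : ∀ n, Measurable (G n))
    (hDindep : iIndepFun D P)
    (hGindep : iIndepFun G P)
    (hDGindep : IndepFun (fun ω => fun n => D n ω) (fun ω => fun n => G n ω) P)
    (hDlaw : ∀ n, P.map (D n) =
      (volume : Measure ℝ).withDensity (fun r =>
        ENNReal.ofReal
          (if r₀ < r ∧ r ≤ 2 * rE + rmin then
            2 * r / ((2 * rE + rmin) ^ 2 - r₀ ^ 2) else 0)))
    (ν : Measure ℝ) [IsProbabilityMeasure ν]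
    (hν : ν {g | g < 0} = 0)
    (hGlaw : ∀ n, P.map (G n) = ν)
    (LG : ℝ → ℝ) (hLG : ∀ x, LG x = ∫ g, Real.exp (-(x * g)) ∂ν)
    (I : Ω → ℝ)
    (hI : ∀ ω, I ω = ∑ n : Fin m,
      if D n ω ≤ rmax then pi * G n ω * (D n ω) ^ (-α) else 0)
    (PI : ℝ) (hPI : PI = (rmax ^ 2 - r₀ ^ 2) / ((2 * rE + rmin) ^ 2 - r₀ ^ 2)) :
    ∀ s : ℝ, 0 ≤ s →
      ∫ ω, Real.exp (-(s * I ω)) ∂P =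
        ∑ k ∈ Finset.range (m + 1),
          (m.choose k : ℝ) * (1 - PI) ^ (m - k) *
            (∫ r in r₀..rmax,
              LG (s * pi * r ^ (-α)) * (2 * r / ((2 * rE + rmin) ^ 2 - r₀ ^ 2))) ^ k :=
  laplace_transform_interference_general_fading_general P rE rmin rmax r₀ α pi hrE hrmin hpi hrmax
    hr₀l hr₀u m D G hDmeas hGmeas hDindep hGindep hDGindep hDlaw ν hν hGlaw LG hLG I hI PI hPI
end

section
/- Let r⊕ > 0, rmin > 0, p_i > 0 be real numbers, let rmax = √(2·r⊕·rmin + rmin²), fix r₀ with rmin ≤ r₀ < rmax, and let m be a natural number. On a probability space let D₁, …, D_m be i.i.d. real random variables with density r ↦ 2r/((2·r⊕ + rmin)² − r₀²) on (r₀, 2·r⊕ + rmin], and let G₁, …, G_m be i.i.d. exponential random variables with rate 1, independent of (D₁, …, D_m). Define I = Σ_{n=1}^m 1{D_n ≤ rmax}·p_i·G_n·D_n^{−2}. Then for every s > 0, E[exp(−s·I)] = Σ_{k=0}^{m} C(m, k)·(1 − P_I)^{m−k}·(P_I·((p_i·s/(rmax² − r₀²))·ln((p_i·s + r₀²)/(p_i·s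 + rmax²)) + 1))^k, where P_I = (rmax² − r₀²)/((2·r⊕ + rmin)² − r₀²). -/
open MeasureTheory ProbabilityTheory Real Set
open scoped Interval

/-!
Given the distances, the Rayleigh gains are independent `Exp(1)` variables, so a link at
distance `D` contributes the factor `E[exp(-c G)] = 1 / (1 + c)` with `c = pᵢ s D⁻²` if
`D ≤ rmax` and `c = 0` otherwise. The links are i.i.d., so the Laplace transform is the `m`-th
power of `E[1 / (1 + c(D))]`. Since `D²` is uniform on `(r₀², R²]` with `R = 2 r⊕ + rmin`, this
is an elementary integral, `1 - pᵢ s / (R² - r₀²) * log ((pᵢ s + rmax²) / (pᵢ s + r₀²))`, which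
equals `(1 - P_I) + P_I * (…)`; the binomial theorem gives the stated sum.
-/

-- No sign condition on `x`: for an integer exponent `Real.rpow` agrees with `zpow`.
theorem rpow_neg_two (x : ℝ) : x ^ (-2 : ℝ) = (x ^ 2)⁻¹ := by
  rw [show (-2 : ℝ) = ((-2 : ℤ) : ℝ) by norm_num, rpow_intCast, zpow_neg, zpow_ofNat]

theorem integral_prod_comp_eq_pow_of_iid {Ω ι α β : Type*} [Fintype ι] [MeasurableSpace Ω]
    [MeasurableSpace α] [MeasurableSpace β] {P : Measure Ω} [IsProbabilityMeasure P]
    {X : ι → Ω → α} {Y : ι → Ω → β}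
    (hX : ∀ i, Measurable (X i)) (hY : ∀ i, Measurable (Y i))
    (hXindep : iIndepFun X P) (hYindep : iIndepFun Y P)
    (hXY : IndepFun (fun ω i => X i ω) (fun ω i => Y i ω) P)
    {μ : Measure α} {ν : Measure β} [SigmaFinite μ] [SigmaFinite ν]
    (hXlaw : ∀ i, P.map (X i) = μ) (hYlaw : ∀ i, P.map (Y i) = ν)
    {f : α × β → ℝ} (hf : Measurable f) :
    ∫ ω, ∏ i, f (X i ω, Y i ω) ∂P = (∫ p, f p ∂(μ.prod ν)) ^ Fintype.card ι := by
  have hXvec : Measurable fun ω i => X i ω := measurable_pi_lambda _ hX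
  have hYvec : Measurable fun ω i => Y i ω := measurable_pi_lambda _ hY
  have hjoint : P.map (fun ω => (fun i => X i ω, fun i => Y i ω)) =
      (Measure.pi fun _ : ι => μ).prod (Measure.pi fun _ : ι => ν) := by
    rw [(indepFun_iff_map_prod_eq_prod_map_map hXvec.aemeasurable hYvec.aemeasurable).1 hXY,
      hXindep.map_fun_eq_pi_map fun i => (hX i).aemeasurable,
      hYindep.map_fun_eq_pi_map fun i => (hY i).aemeasurable]
    simp only [hXlaw, hYlaw]
  have hF : Measurable fun z : (ι → α) × (ι → β) => ∏ i, f (z.1 i, z.2 i) := by fun_prop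
  calc ∫ ω, ∏ i, f (X i ω, Y i ω) ∂P
      = ∫ z, ∏ i, f (z.1 i, z.2 i) ∂((Measure.pi fun _ : ι => μ).prod (Measure.pi fun _ => ν)) := by
        rw [← hjoint, integral_map (hXvec.prodMk hYvec).aemeasurable hF.aestronglyMeasurable]
    _ = ∫ w, ∏ i, f (w i) ∂(Measure.pi fun _ : ι => μ.prod ν) :=
        ((measurePreserving_arrowProdEquivProdArrow α β ι _ _).integral_comp' _).symm
    _ = (∫ p, f p ∂(μ.prod ν)) ^ Fintype.card ι := integral_fintype_prod_eq_pow _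

theorem integral_exp_neg_mul_expMeasure {r c : ℝ} (hr : 0 < r) (hc : -r < c) :
    ∫ x, exp (-(c * x)) ∂expMeasure r = r / (r + c) := by
  have hdens : ∀ x, (exponentialPDF r x).toReal • exp (-(c * x)) =
      (Ici 0).indicator (fun x => r * exp (-(r + c) * x)) x := by
    intro x
    rw [exponentialPDF_eq, ENNReal.toReal_ofReal (by split_ifs <;> positivity), smul_eq_mul]
    by_cases hx : 0 ≤ x
    · rw [if_pos hx, indicator_of_mem (show x ∈ Ici 0 from hx), mul_assoc, ← exp_add]
      ring_nf
    · rw [if_neg hx, indicator_of_notMem (show x ∉ Ici 0 from hx), zero_mul]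
  have hmeas : Measurable (exponentialPDF r) := (measurable_exponentialPDFReal r).ennreal_ofReal
  change ∫ x, exp (-(c * x)) ∂volume.withDensity (exponentialPDF r) = _
  rw [integral_withDensity_eq_integral_toReal_smul hmeas
      (.of_forall fun _ => ENNReal.ofReal_lt_top), integral_congr_ae (.of_forall hdens),
    integral_indicator measurableSet_Ici, integral_Ici_eq_integral_Ioi, integral_const_mul,
    integral_exp_mul_Ioi (by linarith) 0]
  field_simp
  simp

theorem ae_nonneg_expMeasure (r : ℝ) : ∀ᵐ x ∂expMeasure r, 0 ≤ x := by
  change ∀ᵐ x ∂volume.withDensity (exponentialPDF r), 0 ≤ x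
  rw [ae_iff, show {x : ℝ | ¬0 ≤ x} = Iio 0 by ext; simp, withDensity_apply _ measurableSet_Iio]
  exact lintegral_exponentialPDF_of_nonpos le_rfl

theorem integral_exp_neg_mul_prod_expMeasure {α : Type*} [MeasurableSpace α] {μ : Measure α}
    [IsFiniteMeasure μ] {r : ℝ} (hr : 0 < r) {c : α → ℝ} (hc : Measurable c)
    (hc0 : ∀ x, 0 ≤ c x) :
    ∫ p, exp (-(c p.1 * p.2)) ∂(μ.prod (expMeasure r)) = ∫ x, r / (r + c x) ∂μ := by
  have := isProbabilityMeasure_expMeasure hr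
  have hbound : ∀ᵐ p ∂(μ.prod (expMeasure r)), ‖exp (-(c p.1 * p.2))‖ ≤ 1 :=
    Measure.quasiMeasurePreserving_snd.ae (ae_nonneg_expMeasure r) |>.mono fun p hp => by
      rw [norm_of_nonneg (exp_nonneg _), exp_le_one_iff, neg_nonpos]
      exact mul_nonneg (hc0 p.1) hp
  have hint : Integrable (fun p : α × ℝ => exp (-(c p.1 * p.2))) (μ.prod (expMeasure r)) :=
    (integrable_const 1).mono' (by fun_prop) hbound
  rw [integral_prod _ hint]
  exact integral_congr_ae (.of_forall fun x =>
    integral_exp_neg_mul_expMeasure (c := c x) hr (by linarith [hc0 x]))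

-- The law of `‖z‖` for `z` uniform on the planar annulus `r₀ < ‖z‖ ≤ R`. The satellite
-- distances `D n` of the theorem have law `annulusRadiusMeasure r₀ (2 * rE + rmin)`.
noncomputable def annulusRadiusPDF (r₀ R r : ℝ) : ℝ :=
  if r₀ < r ∧ r ≤ R then 2 * r / (R ^ 2 - r₀ ^ 2) else 0

noncomputable def annulusRadiusMeasure (r₀ R : ℝ) : Measure ℝ :=
  volume.withDensity fun r => ENNReal.ofReal (annulusRadiusPDF r₀ R r)

section Annulus
variable {r₀ R : ℝ}

theorem annulusRadiusPDF_eq_indicator (r₀ R : ℝ) :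
    annulusRadiusPDF r₀ R = (Ioc r₀ R).indicator fun r => 2 * r / (R ^ 2 - r₀ ^ 2) := by
  ext r
  simp [annulusRadiusPDF, indicator, mem_Ioc]

theorem annulusRadiusPDF_nonneg (h₀ : 0 ≤ r₀) (r : ℝ) : 0 ≤ annulusRadiusPDF r₀ R r := by
  unfold annulusRadiusPDF
  split_ifs with hr
  · have : 0 ≤ R ^ 2 - r₀ ^ 2 := by nlinarith [hr.1, hr.2]
    have : 0 ≤ r := by linarith [hr.1]
    positivity
  · exact le_rfl

theorem measurable_annulusRadiusPDF (r₀ R : ℝ) : Measurable (annulusRadiusPDF r₀ R) := by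
  rw [annulusRadiusPDF_eq_indicator]
  exact (by fun_prop : Measurable fun r : ℝ => 2 * r / (R ^ 2 - r₀ ^ 2)).indicator
    measurableSet_Ioc

theorem integrable_annulusRadiusPDF (r₀ R : ℝ) : Integrable (annulusRadiusPDF r₀ R) := by
  rw [annulusRadiusPDF_eq_indicator, integrable_indicator_iff measurableSet_Ioc]
  exact (by fun_prop : Continuous fun r : ℝ => 2 * r / (R ^ 2 - r₀ ^ 2)).integrableOn_Ioc

theorem integral_annulusRadiusPDF_mul (hR : r₀ ≤ R) (h : ℝ → ℝ) :
    ∫ x, annulusRadiusPDF r₀ R x * h x = (∫ x in r₀..R, 2 * x * h x) / (R ^ 2 - r₀ ^ 2) := by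
  simp_rw [annulusRadiusPDF_eq_indicator, ← indicator_mul_left]
  rw [integral_indicator measurableSet_Ioc, ← intervalIntegral.integral_of_le hR,
    ← intervalIntegral.integral_div]
  congr 1 with x
  ring

theorem integral_annulusRadiusMeasure (h₀ : 0 ≤ r₀) (hR : r₀ ≤ R) (h : ℝ → ℝ) :
    ∫ x, h x ∂annulusRadiusMeasure r₀ R = (∫ x in r₀..R, 2 * x * h x) / (R ^ 2 - r₀ ^ 2) := by
  rw [annulusRadiusMeasure, integral_withDensity_eq_integral_toReal_smul
    (measurable_annulusRadiusPDF r₀ R).ennreal_ofReal (.of_forall fun _ => ENNReal.ofReal_lt_top)]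
  simp_rw [ENNReal.toReal_ofReal (annulusRadiusPDF_nonneg h₀ _), smul_eq_mul]
  exact integral_annulusRadiusPDF_mul hR h

theorem isProbabilityMeasure_annulusRadiusMeasure (h₀ : 0 ≤ r₀) (hR : r₀ < R) :
    IsProbabilityMeasure (annulusRadiusMeasure r₀ R) := by
  have hK : R ^ 2 - r₀ ^ 2 ≠ 0 := by nlinarith
  constructor
  rw [annulusRadiusMeasure, withDensity_apply _ .univ, Measure.restrict_univ,
    ← ofReal_integral_eq_lintegral_ofReal (integrable_annulusRadiusPDF r₀ R)
      (.of_forall (annulusRadiusPDF_nonneg h₀)), ENNReal.ofReal_eq_one]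
  have h := integral_annulusRadiusPDF_mul hR.le fun _ => 1
  simp only [mul_one] at h
  rw [h, intervalIntegral.integral_const_mul, integral_id]
  field_simp

end Annulus

section
variable {a : ℝ}

theorem two_mul_mul_one_div_one_add_mul_inv_sq (ha : 0 < a) (x : ℝ) :
    2 * x * (1 / (1 + a * (x ^ 2)⁻¹)) = 2 * x - a * (2 * x / (x ^ 2 + a)) := by
  rcases eq_or_ne x 0 with rfl | hx
  · simp
  · field_simp
    ring

theorem continuous_two_mul_sub_mul_div_sq_add (ha : 0 < a) :
    Continuous fun x : ℝ => 2 * x - a * (2 * x / (x ^ 2 + a)) :=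
  by fun_prop (disch := intro x; positivity)

theorem integral_two_mul_sub_mul_div_sq_add (ha : 0 < a) (x₀ x₁ : ℝ) :
    ∫ x in x₀..x₁, (2 * x - a * (2 * x / (x ^ 2 + a))) =
      x₁ ^ 2 - x₀ ^ 2 - a * log ((a + x₁ ^ 2) / (a + x₀ ^ 2)) := by
  have hderiv : ∀ x : ℝ, HasDerivAt (fun x => x ^ 2 - a * log (x ^ 2 + a))
      (2 * x - a * (2 * x / (x ^ 2 + a))) x := by
    intro x
    have hsq : HasDerivAt (fun x : ℝ => x ^ 2) (2 * x) x := by simpa using hasDerivAt_pow 2 x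
    exact hsq.sub (((hsq.add_const a).log (by positivity)).const_mul a)
  rw [intervalIntegral.integral_eq_sub_of_hasDerivAt (fun x _ => hderiv x)
    ((continuous_two_mul_sub_mul_div_sq_add ha).intervalIntegrable _ _),
    log_div (by positivity) (by positivity)]
  ring_nf

theorem integral_one_div_one_add_annulusRadiusMeasure {r₀ ρ R : ℝ} (h₀ : 0 ≤ r₀)
    (h₁ : r₀ < ρ) (h₂ : ρ ≤ R) (ha : 0 < a) :
    ∫ x, 1 / (1 + if x ≤ ρ then a * (x ^ 2)⁻¹ else 0) ∂annulusRadiusMeasure r₀ R =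
      1 - a / (R ^ 2 - r₀ ^ 2) * log ((a + ρ ^ 2) / (a + r₀ ^ 2)) := by
  have hK : R ^ 2 - r₀ ^ 2 ≠ 0 := by nlinarith
  have hnear : EqOn (fun x => 2 * x * (1 / (1 + if x ≤ ρ then a * (x ^ 2)⁻¹ else 0)))
      (fun x => 2 * x - a * (2 * x / (x ^ 2 + a))) (Ι r₀ ρ) := fun x hx => by
    rw [uIoc_of_le h₁.le] at hx
    simp only [if_pos hx.2, two_mul_mul_one_div_one_add_mul_inv_sq ha]
  have hfar : EqOn (fun x => 2 * x * (1 / (1 + if x ≤ ρ then a * (x ^ 2)⁻¹ else 0)))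
      (fun x => 2 * x) (Ι ρ R) := fun x hx => by
    rw [uIoc_of_le h₂] at hx
    simp [if_neg (not_le.2 hx.1)]
  rw [integral_annulusRadiusMeasure h₀ (h₁.le.trans h₂),
    ← intervalIntegral.integral_add_adjacent_intervals
      ((intervalIntegrable_congr hnear).2
        ((continuous_two_mul_sub_mul_div_sq_add ha).intervalIntegrable _ _))
      ((intervalIntegrable_congr hfar).2
        ((continuous_const.mul continuous_id).intervalIntegrable _ _)),
    intervalIntegral.integral_congr_ae (.of_forall fun x hx => hnear hx),
    intervalIntegral.integral_congr_ae (.of_forall fun x hx => hfar hx),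
    integral_two_mul_sub_mul_div_sq_add ha, intervalIntegral.integral_const_mul, integral_id]
  field_simp
  ring
end

/-- Closed-form Laplace transform of the cumulative interference for path loss exponent
`α = 2` (equation (43) of the paper), under Rayleigh fading on the interfering links. -/
theorem laplace_transform_interference_rayleigh_alpha_two
    {Ω : Type*} [MeasurableSpace Ω] (P : Measure Ω) [IsProbabilityMeasure P]
    (rE rmin rmax r₀ pi : ℝ) (hrE : 0 < rE) (hrmin : 0 < rmin) (hpi : 0 < pi)
    (hrmax : rmax = Real.sqrt (2 * rE * rmin + rmin ^ 2))
    (hr₀l : rmin ≤ r₀) (hr₀u : r₀ < rmax)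
    (m : ℕ)
    (D : Fin m → Ω → ℝ) (G : Fin m → Ω → ℝ)
    (hDmeas : ∀ n, Measurable (D n)) (hGmeas : ∀ n, Measurable (G n))
    (hDindep : iIndepFun D P)
    (hGindep : iIndepFun G P)
    (hDGindep : IndepFun (fun ω => fun n => D n ω) (fun ω => fun n => G n ω) P)
    (hDlaw : ∀ n, P.map (D n) =
      (volume : Measure ℝ).withDensity (fun r =>
        ENNReal.ofReal
          (if r₀ < r ∧ r ≤ 2 * rE + rmin then
            2 * r / ((2 * rE + rmin) ^ 2 - r₀ ^ 2) else 0)))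
    (hGlaw : ∀ n, P.map (G n) = expMeasure 1)
    (I : Ω → ℝ)
    (hI : ∀ ω, I ω = ∑ n : Fin m,
      if D n ω ≤ rmax then pi * G n ω * (D n ω) ^ (-2 : ℝ) else 0)
    (PI : ℝ) (hPI : PI = (rmax ^ 2 - r₀ ^ 2) / ((2 * rE + rmin) ^ 2 - r₀ ^ 2)) :
    ∀ s : ℝ, 0 < s →
      ∫ ω, Real.exp (-(s * I ω)) ∂P =
        ∑ k ∈ Finset.range (m + 1),
          (m.choose k : ℝ) * (1 - PI) ^ (m - k) *
            (PI * ((pi * s / (rmax ^ 2 - r₀ ^ 2)) *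
              Real.log ((pi * s + r₀ ^ 2) / (pi * s + rmax ^ 2)) + 1)) ^ k := by
  intro s hs
  have hr₀ : 0 < r₀ := hrmin.trans_le hr₀l
  have hrmaxR : rmax ≤ 2 * rE + rmin := by
    rw [hrmax, sqrt_le_left (by positivity)]
    nlinarith
  set c : ℝ → ℝ := fun d => if d ≤ rmax then pi * s * (d ^ 2)⁻¹ else 0 with hc_def
  have hc : Measurable c := Measurable.ite measurableSet_Iic (by fun_prop) measurable_const
  have hc0 (d : ℝ) : 0 ≤ c d := by
    simp only [hc_def]
    split_ifs <;> positivity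
  have hproduct (ω : Ω) : exp (-(s * I ω)) = ∏ n, exp (-(c (D n ω) * G n ω)) := by
    rw [hI, Finset.mul_sum, ← Finset.sum_neg_distrib, exp_sum]
    refine Finset.prod_congr rfl fun n _ => ?_
    simp only [hc_def]
    split_ifs
    · rw [rpow_neg_two]; ring_nf
    · simp
  have hfactor : 1 - pi * s / ((2 * rE + rmin) ^ 2 - r₀ ^ 2) *
      log ((pi * s + rmax ^ 2) / (pi * s + r₀ ^ 2)) =
      PI * ((pi * s / (rmax ^ 2 - r₀ ^ 2)) *
        log ((pi * s + r₀ ^ 2) / (pi * s + rmax ^ 2)) + 1) + (1 - PI) := by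
    have hk : rmax ^ 2 - r₀ ^ 2 ≠ 0 := by nlinarith
    rw [hPI, ← inv_div (pi * s + rmax ^ 2), log_inv]
    field_simp
    ring
  have := isProbabilityMeasure_annulusRadiusMeasure hr₀.le (hr₀u.trans_le hrmaxR)
  have := isProbabilityMeasure_expMeasure one_pos
  calc ∫ ω, exp (-(s * I ω)) ∂P
      = ∫ ω, ∏ n, exp (-(c (D n ω) * G n ω)) ∂P := integral_congr_ae (.of_forall hproduct)
    _ = (∫ p, exp (-(c p.1 * p.2)) ∂(annulusRadiusMeasure r₀ (2 * rE + rmin)).prod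
          (expMeasure 1)) ^ m := by
        simpa using integral_prod_comp_eq_pow_of_iid hDmeas hGmeas hDindep hGindep hDGindep
          (μ := annulusRadiusMeasure r₀ (2 * rE + rmin)) hDlaw hGlaw
          (f := fun p => exp (-(c p.1 * p.2))) (by fun_prop)
    _ = (∫ x, 1 / (1 + c x) ∂annulusRadiusMeasure r₀ (2 * rE + rmin)) ^ m := by
        rw [integral_exp_neg_mul_prod_expMeasure one_pos hc hc0]
    _ = (1 - pi * s / ((2 * rE + rmin) ^ 2 - r₀ ^ 2) *
          log ((pi * s + rmax ^ 2) / (pi * s + r₀ ^ 2))) ^ m :=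
        congrArg (· ^ m) <|
          integral_one_div_one_add_annulusRadiusMeasure hr₀.le hr₀u hrmaxR (mul_pos hpi hs)
    _ = _ := by
        rw [hfactor, add_pow]
        exact Finset.sum_congr rfl fun k _ => by ring
end
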